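/- Let μ be a Borel measure, Q a square, and suppose: 2Q is not (1/40, b)-balanced with respect to μ; θ_μ(2Q) ≤ C₄·A·θ; and θ_μ((1/2)Q) ≥ C₄⁻¹·δ·θ, where θ > 0, A, δ, C₄ are positive constants. If b is sufficiently small compared to δ/A (specifically 2·10⁵·b·C₄²·A ≤ δ/2 suffices, and also 2·10⁵·b ≤ 1/20 appropriately), then μ(2Q ∖ Q) ≤ (1/10)·μ(Q). -/

import Mathlib

/-!
If the annulus `2Q \ Q` carried more than `μ(Q)/10`, it would carry more than `μ(2Q)/11`, so by
pigeonhole one of the `400²` grid subsquares of `2Q` (of side `ℓ(Q)/200`) meets the annulus and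
has mass at least `μ(2Q)/(11·400²) ≥ b μ(2Q)`. The two density bounds give
`δ μ(2Q) ≤ 4 C₄² A μ(Q/2)`, so one of the `100²` grid subsquares of `Q/2` also has mass at least
`b μ(2Q)`. The first square lies within `ℓ(Q)/200` of a point outside `Q`, the second inside `Q/2`,
so they are `ℓ(Q)/4 - ℓ(Q)/200 ≥ ℓ(2Q)/40` apart and `2Q` would be `(1/40, b)`-balanced.
-/

open MeasureTheory

/-- The closed axis-parallel square with center `c` and side length `l`. -/
def square (c : ℂ) (l : ℝ) : Set ℂ := {z | |z.re - c.re| ≤ l / 2 ∧ |z.im - c.im| ≤ l / 2}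

/-- The square with center `c` and side `l` is `(a,b)`-balanced with respect to `μ`. -/
def IsBalanced (μ : Measure ℂ) (a b : ℝ) (c : ℂ) (l : ℝ) : Prop :=
  ∃ (c₁ : ℂ) (l₁ : ℝ) (c₂ : ℂ) (l₂ : ℝ),
    square c₁ l₁ ⊆ square c l ∧ square c₂ l₂ ⊆ square c l ∧
    (∀ p ∈ square c₁ l₁, ∀ q ∈ square c₂ l₂, a * l ≤ dist p q) ∧
    l₁ ≤ a / 10 * l ∧ l₂ ≤ a / 10 * l ∧
    ENNReal.ofReal b * μ (square c l) ≤ μ (square c₁ l₁) ∧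
    ENNReal.ofReal b * μ (square c l) ≤ μ (square c₂ l₂)

/-- The linear density `θ_μ(Q) = μ(Q)/ℓ(Q)` of the square with center `c` and side `l`. -/
noncomputable def lindens (μ : Measure ℂ) (c : ℂ) (l : ℝ) : ℝ := (μ (square c l)).toReal / l

lemma square_mono {c : ℂ} {a b : ℝ} (h : a ≤ b) : square c a ⊆ square c b :=
  fun _ hz ↦ ⟨hz.1.trans (by linarith), hz.2.trans (by linarith)⟩

lemma exists_nat_le_le_add_one {x : ℝ} {n : ℕ} (hn : 0 < n) (h0 : 0 ≤ x) (hx : x ≤ n) :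
    ∃ i < n, (i : ℝ) ≤ x ∧ x ≤ i + 1 := by
  rcases hx.lt_or_eq with hx | rfl
  · exact ⟨⌊x⌋₊, (Nat.floor_lt h0).2 hx, Nat.floor_le h0, (Nat.lt_floor_add_one x).le⟩
  · exact ⟨n - 1, by omega, by simp, by simp [Nat.cast_sub hn]⟩

noncomputable def gridPoint (a s : ℝ) (n i : ℕ) : ℝ := a - s / 2 + (i + 1 / 2) * (s / n)

lemma exists_abs_sub_gridPoint_le {a s u : ℝ} (hs : 0 < s) {n : ℕ} (hn : 0 < n)
    (hu : |u - a| ≤ s / 2) : ∃ i < n, |u - gridPoint a s n i| ≤ s / n / 2 := by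
  have hn' : (0 : ℝ) < n := by exact_mod_cast hn
  rw [abs_le] at hu
  obtain ⟨i, hi, hlo, hhi⟩ := exists_nat_le_le_add_one (x := (u - a + s / 2) * n / s) hn
    (by apply div_nonneg <;> nlinarith) (by rw [div_le_iff₀ hs]; nlinarith)
  refine ⟨i, hi, abs_le.2 ⟨?_, ?_⟩⟩
  · rw [le_div_iff₀ hs] at hlo
    have : (i : ℝ) * (s / n) ≤ u - a + s / 2 := by
      rw [mul_div_assoc', div_le_iff₀ hn']; linarith
    unfold gridPoint; linarith
  · rw [div_le_iff₀ hs] at hhi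
    have : u - a + s / 2 ≤ (i + 1) * (s / n) := by
      rw [mul_div_assoc', le_div_iff₀ hn']; linarith
    unfold gridPoint; linarith

lemma abs_sub_le_of_abs_sub_gridPoint_le {a s u : ℝ} {n i : ℕ} (hi : i < n)
    (hu : |u - gridPoint a s n i| ≤ s / n / 2) : |u - a| ≤ s / 2 := by
  have hw : 0 ≤ s / n := by linarith [abs_nonneg (u - gridPoint a s n i)]
  have hs : (n : ℝ) * (s / n) = s := mul_div_cancel₀ s (Nat.cast_ne_zero.2 (by omega))
  have hi' : (i : ℝ) + 1 ≤ n := by exact_mod_cast hi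
  unfold gridPoint at hu
  rw [abs_le] at hu ⊢
  constructor <;> nlinarith [mul_le_mul_of_nonneg_right hi' hw, mul_nonneg (Nat.cast_nonneg i) hw]

noncomputable def gridCenter (c : ℂ) (s : ℝ) (n i j : ℕ) : ℂ :=
  ⟨gridPoint c.re s n i, gridPoint c.im s n j⟩

lemma square_gridCenter_subset {c : ℂ} {s : ℝ} {n i j : ℕ} (hi : i < n) (hj : j < n) :
    square (gridCenter c s n i j) (s / n) ⊆ square c s :=
  fun _ hz ↦ ⟨abs_sub_le_of_abs_sub_gridPoint_le hi hz.1,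
    abs_sub_le_of_abs_sub_gridPoint_le hj hz.2⟩

lemma square_subset_biUnion_gridCenter {c : ℂ} {s : ℝ} (hs : 0 < s) {n : ℕ} (hn : 0 < n) :
    square c s ⊆
      ⋃ p ∈ Finset.range n ×ˢ Finset.range n, square (gridCenter c s n p.1 p.2) (s / n) := by
  intro z hz
  obtain ⟨i, hi, hzi⟩ := exists_abs_sub_gridPoint_le hs hn hz.1
  obtain ⟨j, hj, hzj⟩ := exists_abs_sub_gridPoint_le hs hn hz.2
  exact Set.mem_iUnion₂.2 ⟨(i, j), by simp [hi, hj], hzi, hzj⟩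

lemma exists_square_subset_measure_le (μ : Measure ℂ) {c : ℂ} {s : ℝ} (hs : 0 < s) {n : ℕ}
    (hn : 0 < n) {T : Set ℂ} (hT : T ⊆ square c s) :
    ∃ c', square c' (s / n) ⊆ square c s ∧ μ T ≤ n ^ 2 * μ (square c' (s / n) ∩ T) := by
  set G := Finset.range n ×ˢ Finset.range n
  set cell : ℕ × ℕ → Set ℂ := fun p ↦ square (gridCenter c s n p.1 p.2) (s / n) ∩ T
  obtain ⟨p, hp, hmax⟩ := G.exists_max_image (fun p ↦ μ (cell p)) ⟨(0, 0), by simp [G, hn]⟩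
  simp only [G, Finset.mem_product, Finset.mem_range] at hp
  refine ⟨_, square_gridCenter_subset hp.1 hp.2, ?_⟩
  have hcover : T ⊆ ⋃ q ∈ G, cell q := by
    intro z hz
    obtain ⟨q, hq, hzq⟩ := Set.mem_iUnion₂.1 (square_subset_biUnion_gridCenter hs hn (hT hz))
    exact Set.mem_iUnion₂.2 ⟨q, hq, hzq, hz⟩
  calc μ T ≤ ∑ q ∈ G, μ (cell q) := (measure_mono hcover).trans (measure_biUnion_finset_le _ _)
    _ ≤ G.card • μ (cell p) := Finset.sum_le_card_nsmul _ _ _ hmax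
    _ = n ^ 2 * μ (cell p) := by simp [G, sq]

lemma exists_square_subset_measureReal_le (μ : Measure ℂ) [IsFiniteMeasure μ] {c : ℂ} {s : ℝ}
    (hs : 0 < s) {n : ℕ} (hn : 0 < n) {T : Set ℂ} (hT : T ⊆ square c s) :
    ∃ c', square c' (s / n) ⊆ square c s ∧ μ.real T ≤ n ^ 2 * μ.real (square c' (s / n) ∩ T) := by
  obtain ⟨c', hc', hT'⟩ := exists_square_subset_measure_le μ hs hn hT
  refine ⟨c', hc', ?_⟩
  simpa [Measure.real, ENNReal.toReal_mul] using ENNReal.toReal_mono (by finiteness) hT'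

lemma le_abs_sub_of_abs_sub_le {p q v c c' r R s : ℝ} (hp : |p - c| ≤ r / 2)
    (hv : R / 2 < |v - c|) (hvc : |v - c'| ≤ s / 2) (hq : |q - c'| ≤ s / 2) :
    R / 2 - r / 2 - s ≤ |p - q| := by
  rw [abs_le] at hp hvc hq
  rcases lt_abs.1 hv with h | h
  · exact le_abs.2 (Or.inr (by linarith))
  · exact le_abs.2 (Or.inl (by linarith))

lemma le_dist_of_mem_square_of_notMem_square {p q v c c' : ℂ} {r R s : ℝ}
    (hp : p ∈ square c r) (hv : v ∉ square c R) (hv' : v ∈ square c' s) (hq : q ∈ square c' s) :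
    R / 2 - r / 2 - s ≤ dist p q := by
  rw [Complex.dist_eq]
  simp only [square, Set.mem_ofPred_eq, not_and_or, not_le] at hv
  rcases hv with hv | hv
  · calc R / 2 - r / 2 - s ≤ |p.re - q.re| := le_abs_sub_of_abs_sub_le hp.1 hv hv'.1 hq.1
      _ ≤ ‖p - q‖ := by simpa using Complex.abs_re_le_norm (p - q)
  · calc R / 2 - r / 2 - s ≤ |p.im - q.im| := le_abs_sub_of_abs_sub_le hp.2 hv hv'.2 hq.2
      _ ≤ ‖p - q‖ := by simpa using Complex.abs_im_le_norm (p - q)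

lemma mul_measureReal_le_of_lindens_le {μ : Measure ℂ} {θ A δ C : ℝ} (hδ : 0 ≤ δ) (hA : 0 ≤ A)
    (hC : C ≠ 0) {c c' : ℂ} {L l : ℝ} (hL : 0 < L) (hl : 0 < l)
    (hhigh : lindens μ c L ≤ C * A * θ) (hlow : C⁻¹ * δ * θ ≤ lindens μ c' l) :
    δ * l * μ.real (square c L) ≤ C ^ 2 * A * L * μ.real (square c' l) := by
  rw [lindens, ← measureReal_def, div_le_iff₀ hL] at hhigh
  rw [lindens, ← measureReal_def, le_div_iff₀ hl] at hlow
  calc δ * l * μ.real (square c L) ≤ δ * l * (C * A * θ * L) := by gcongr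
    _ = C ^ 2 * A * L * (C⁻¹ * δ * θ * l) := by field_simp
    _ ≤ C ^ 2 * A * L * μ.real (square c' l) := by gcongr

lemma ofReal_mul_measure_le_of_mul_measureReal_le {α : Type*} [MeasurableSpace α]
    {μ : Measure α} [IsFiniteMeasure μ] {b : ℝ} {s t : Set α} (h : b * μ.real s ≤ μ.real t) :
    ENNReal.ofReal b * μ s ≤ μ t := by
  rw [← ofReal_measureReal (μ := μ) (s := s), ← ENNReal.ofReal_mul' measureReal_nonneg,
    ENNReal.ofReal_le_iff_le_toReal (by finiteness)]
  exact h

lemma measureReal_le_of_le_mul_measureReal_sdiff {α : Type*} [MeasurableSpace α]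
    {μ : Measure α} [IsFiniteMeasure μ] {s t : Set α} {k : ℝ} (h : μ.real t ≤ k * μ.real (s \ t)) :
    μ.real s ≤ (k + 1) * μ.real (s \ t) := by
  have := (measureReal_mono (μ := μ) (Set.sdiff_subset_iff.1 subset_rfl)).trans
    (measureReal_union_le t (s \ t))
  linarith

theorem stmt7_general (μ : Measure ℂ) [IsFiniteMeasure μ]
    (b θ A δ C₄ : ℝ) (hb : 0 < b) (hA : 0 < A) (hδ : 0 < δ) (hC₄ : 0 < C₄)
    (c : ℂ) (l : ℝ) (hl : 0 < l)
    (hbal : ¬ IsBalanced μ (1 / 40) b c (2 * l))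
    (hhigh : lindens μ c (2 * l) ≤ C₄ * A * θ)
    (hlow : C₄⁻¹ * δ * θ ≤ lindens μ c (l / 2))
    (hb1 : 2 * 10 ^ 5 * b * C₄ ^ 2 * A ≤ δ / 2)
    (hb2 : 2 * 10 ^ 5 * b ≤ 1 / 20) :
    μ (square c (2 * l) \ square c l) ≤ (1 / 10 : ENNReal) * μ (square c l) := by
  set D := square c (2 * l) \ square c l
  rw [← ENNReal.toReal_le_toReal (by finiteness) (by finiteness), ENNReal.toReal_mul]
  by_contra! hcon
  norm_num [← measureReal_def] at hcon
  have hannulus := measureReal_le_of_le_mul_measureReal_sdiff (μ := μ) (s := square c (2 * l))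
    (t := square c l) (k := 10) (by linarith)
  have hhalf : 10 ^ 4 * b * μ.real (square c (2 * l)) ≤ μ.real (square c (l / 2)) := by
    have hdens := mul_measureReal_le_of_lindens_le hδ.le hA.le hC₄.ne' (by positivity)
      (by positivity) hhigh hlow
    have hμ : 0 ≤ l * μ.real (square c (l / 2)) := by positivity
    refine le_of_mul_le_mul_left ?_ (by positivity : 0 < δ * l)
    nlinarith [mul_le_mul_of_nonneg_left hdens hb.le, mul_le_mul_of_nonneg_right hb1 hμ]
  obtain ⟨c₁, hc₁, hK₁⟩ := exists_square_subset_measureReal_le μ (by positivity : 0 < l / 2)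
    (by norm_num : 0 < 100) subset_rfl
  obtain ⟨c₂, hc₂, hK₂⟩ := exists_square_subset_measureReal_le μ (by positivity : 0 < 2 * l)
    (by norm_num : 0 < 400) (T := D) Set.sdiff_subset
  norm_num at hc₁ hc₂ hK₁ hK₂
  have hK₁₂ :
      μ.real (square c₁ (l / 2 / 100) ∩ square c (l / 2)) ≤ μ.real (square c₁ (l / 2 / 100)) :=
    measureReal_mono Set.inter_subset_left
  have hK₂D : μ.real (square c₂ (2 * l / 400) ∩ D) ≤ μ.real (square c₂ (2 * l / 400)) :=
    measureReal_mono Set.inter_subset_left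
  have hD : 0 < μ.real D := lt_of_le_of_lt (by positivity) hcon
  obtain ⟨v, hvK₂, hvD⟩ : (square c₂ (2 * l / 400) ∩ D).Nonempty :=
    nonempty_of_measureReal_ne_zero (μ := μ) (fun h ↦ by linarith)
  refine hbal ⟨c₁, l / 2 / 100, c₂, 2 * l / 400, hc₁.trans (square_mono (by linarith)), hc₂,
    fun p hp q hq ↦ ?_, by linarith, by linarith, ofReal_mul_measure_le_of_mul_measureReal_le ?_,
    ofReal_mul_measure_le_of_mul_measureReal_le ?_⟩
  · linarith [le_dist_of_mem_square_of_notMem_square (hc₁ hp) hvD.2 hvK₂ hq]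
  · linarith
  · nlinarith [mul_le_mul_of_nonneg_left hannulus hb.le]

theorem stmt7 (μ : Measure ℂ) [IsFiniteMeasure μ]
    (b θ A δ C₄ : ℝ) (hb : 0 < b) (hθ : 0 < θ) (hA : 0 < A) (hδ : 0 < δ) (hC₄ : 0 < C₄)
    (c : ℂ) (l : ℝ) (hl : 0 < l)
    (hbal : ¬ IsBalanced μ (1 / 40) b c (2 * l))
    (hhigh : lindens μ c (2 * l) ≤ C₄ * A * θ)
    (hlow : C₄⁻¹ * δ * θ ≤ lindens μ c (l / 2))
    (hb1 : 2 * 10 ^ 5 * b * C₄ ^ 2 * A ≤ δ / 2)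
    (hb2 : 2 * 10 ^ 5 * b ≤ 1 / 20) :
    μ (square c (2 * l) \ square c l) ≤ (1 / 10 : ENNReal) * μ (square c l) :=
  stmt7_general μ b θ A δ C₄ hb hA hδ hC₄ c l hl hbal hhigh hlow hb1 hb2
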